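/- arXiv:1106.3754 — 2 statements merged into one kernel-verified Lean document; each statement's English description precedes it below -/
import Mathlib

section
/- The maximum cardinality of a family of Hamiltonian paths in K_5 such that the union of any two distinct members contains a triangle equals 10. -/
open SimpleGraph

def IsHamPathGraph {n : ℕ} (G : SimpleGraph (Fin n)) : Prop :=
  ∃ (u v : Fin n) (p : G.Walk u v), p.IsHamiltonian ∧ G.edgeSet = {e | e ∈ p.edges}

def IsHamCycleGraph {n : ℕ} (G : SimpleGraph (Fin n)) : Prop :=
  ∃ (u : Fin n) (c : G.Walk u u), c.IsHamiltonianCycle ∧ G.edgeSet = {e | e ∈ c.edges}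

def HasCycleLen {V : Type*} (G : SimpleGraph V) (P : ℕ → Prop) : Prop :=
  ∃ (v : V) (c : G.Walk v v), c.IsCycle ∧ P c.length

def biparGraph {n : ℕ} (A : Finset (Fin n)) : SimpleGraph (Fin n) where
  Adj u v := (u ∈ A ∧ v ∉ A) ∨ (v ∈ A ∧ u ∉ A)
  symm := ⟨fun u v h => by tauto⟩
  loopless := ⟨fun u h => by tauto⟩

def almostBalanced {n : ℕ} (A : Finset (Fin n)) : Prop :=
  |(A.card : ℤ) - ((n : ℤ) - A.card)| ≤ 1

def ContainsK4 {n : ℕ} (G : SimpleGraph (Fin n)) : Prop :=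
  ∃ f : Fin 4 → Fin n, Function.Injective f ∧ ∀ i j, i ≠ j → G.Adj (f i) (f j)

/-!
Label the vertices of a Hamiltonian path in `K₅` by the parity of their position: the two inner
vertices at odd positions form a 2-set `A`, and every edge of the path joins `A` to its
complement. If two paths give the same `A`, their union is bipartite and has no triangle, so a
family as in the theorem injects into the 2-subsets of `Fin 5` and has at most `C(5, 2) = 10`
members. Ten explicit paths, one for each 2-set of inner vertices, attain the bound.
-/

namespace SimpleGraph.Walk

variable {V : Type*} [DecidableEq V] {G : SimpleGraph V} {u v : V}

/-- For a path, the set of vertices at odd positions of its support. -/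
def oddVerts : ∀ {u v : V}, G.Walk u v → Finset V
  | _, _, nil => ∅
  | _, _, cons _ q => q.support.toFinset \ q.oddVerts

lemma oddVerts_subset_support (p : G.Walk u v) : p.oddVerts ⊆ p.support.toFinset := by
  cases p with
  | nil => simp [oddVerts]
  | cons _ q =>
    intro x hx
    rw [oddVerts, Finset.mem_sdiff, List.mem_toFinset] at hx
    simp [hx.1]

lemma IsPath.start_notMem_oddVerts {p : G.Walk u v} (hp : p.IsPath) :
    u ∉ p.oddVerts := by
  cases p with
  | nil => simp [oddVerts]
  | cons _ q =>
    simp only [oddVerts, Finset.mem_sdiff, List.mem_toFinset, not_and_or, not_not]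
    exact .inl (cons_isPath_iff _ _ |>.1 hp).2

lemma IsPath.card_oddVerts {p : G.Walk u v} (hp : p.IsPath) :
    p.oddVerts.card = (p.length + 1) / 2 := by
  induction p with
  | nil => simp [oddVerts]
  | cons _ q ih =>
    have hq := (cons_isPath_iff _ _ |>.1 hp).1
    rw [oddVerts, Finset.card_sdiff_of_subset (oddVerts_subset_support q), ih hq,
      List.toFinset_card_of_nodup hq.support_nodup, length_support, length_cons]
    omega

lemma IsPath.mem_oddVerts_iff_of_mem_edges {x y : V} {p : G.Walk u v} (hp : p.IsPath)
    (he : s(x, y) ∈ p.edges) : x ∈ p.oddVerts ↔ y ∉ p.oddVerts := by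
  induction p with
  | nil => simp at he
  | cons h q ih =>
    have hq := (cons_isPath_iff _ _ |>.1 hp).1
    simp only [oddVerts, Finset.mem_sdiff, List.mem_toFinset]
    rcases List.mem_cons.1 he with he | he
    · have hu := (cons_isPath_iff _ _ |>.1 hp).2
      have hw := hq.start_notMem_oddVerts
      have hw' := q.start_mem_support
      rcases Sym2.eq_iff.1 he with ⟨rfl, rfl⟩ | ⟨rfl, rfl⟩ <;> tauto
    · have := ih hq he
      have := q.fst_mem_support_of_mem_edges he
      have := q.snd_mem_support_of_mem_edges he
      tauto

end SimpleGraph.Walk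

lemma hasCycleLen_three_iff {V : Type*} {G : SimpleGraph V} :
    HasCycleLen G (· = 3) ↔ ¬ G.CliqueFree 3 := by
  rw [HasCycleLen, ← is3Clique_iff_exists_cycle_length_three]
  simp [CliqueFree]

lemma biparGraph_colorable {n : ℕ} (A : Finset (Fin n)) : (biparGraph A).Colorable 2 :=
  Coloring.colorable (α := Bool) <| Coloring.mk (fun v => decide (v ∈ A)) fun h => by
    simp only [biparGraph] at h
    rcases h with h | h <;> simp [h]

lemma not_hasCycleLen_three_of_le_biparGraph {n : ℕ} {G : SimpleGraph (Fin n)}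
    {A : Finset (Fin n)} (h : G ≤ biparGraph A) : ¬ HasCycleLen G (· = 3) :=
  hasCycleLen_three_iff.not_left.2 <|
    ((biparGraph_colorable A).mono_left h).cliqueFree (by norm_num)

lemma IsHamPathGraph.exists_le_biparGraph {n : ℕ} {G : SimpleGraph (Fin n)}
    (hG : IsHamPathGraph G) : ∃ A : Finset (Fin n), A.card = n / 2 ∧ G ≤ biparGraph A := by
  obtain ⟨u, _, p, hp, hedges⟩ := hG
  refine ⟨p.oddVerts, ?_, fun x y hxy => ?_⟩
  · rw [hp.isPath.card_oddVerts, hp.length_eq, Fintype.card_fin, Nat.sub_add_cancel u.pos]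
  · have he : s(x, y) ∈ p.edges := by
      rw [← mem_edgeSet, hedges] at hxy
      exact hxy
    have := hp.isPath.mem_oddVerts_iff_of_mem_edges he
    simp only [biparGraph]
    tauto

theorem ncard_le_choose_of_pairwise_hasCycleLen_three {n : ℕ} {F : Set (SimpleGraph (Fin n))}
    (hham : ∀ G ∈ F, IsHamPathGraph G)
    (htri : ∀ G ∈ F, ∀ H ∈ F, G ≠ H → HasCycleLen (G ⊔ H) (· = 3)) :
    F.ncard ≤ n.choose (n / 2) := by
  choose! A hcard hle using fun G hG => (hham G hG).exists_le_biparGraph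
  have hA : Set.InjOn A F := fun G hG H hH hGH => by
    by_contra hne
    exact not_hasCycleLen_three_of_le_biparGraph
      (sup_le (hle G hG) (hGH ▸ hle H hH)) (htri G hG H hH hne)
  calc F.ncard ≤ (Finset.univ.powersetCard (n / 2) : Finset (Finset (Fin n))).card := by
        rw [← Set.ncard_coe_finset]
        exact Set.ncard_le_ncard_of_injOn A (fun G hG => by simpa using hcard G hG) hA
    _ = n.choose (n / 2) := by simp

def pathThrough {V : Type*} {n : ℕ} (f : Fin (n + 1) → V) : SimpleGraph V :=
  fromEdgeSet (Set.range fun i : Fin n => s(f i.castSucc, f i.succ))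

lemma pathThrough_adj {V : Type*} {n : ℕ} {f : Fin (n + 1) → V} {u v : V} :
    (pathThrough f).Adj u v ↔ (∃ i : Fin n, s(f i.castSucc, f i.succ) = s(u, v)) ∧ u ≠ v :=
  Iff.rfl

instance {V : Type*} [DecidableEq V] {n : ℕ} (f : Fin (n + 1) → V) :
    DecidableRel (pathThrough f).Adj :=
  fun _ _ => decidable_of_iff' _ pathThrough_adj

lemma exists_walk_pathThrough {V : Type*} {n : ℕ} (f : Fin (n + 1) → V) (hf : f.Injective) :
    ∃ p : (pathThrough f).Walk (f 0) (f (Fin.last n)),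
      p.support = List.ofFn f ∧
        p.edges = List.ofFn fun i : Fin n => s(f i.castSucc, f i.succ) := by
  induction n with
  | zero => exact ⟨.nil, rfl, rfl⟩
  | succ n ih =>
    obtain ⟨q, hsupp, hedges⟩ := ih (f ∘ Fin.succ) (hf.comp (Fin.succ_injective _))
    have hle : pathThrough (f ∘ Fin.succ) ≤ pathThrough f :=
      fun u v ⟨⟨i, hi⟩, huv⟩ => ⟨⟨i.succ, hi⟩, huv⟩
    have hadj : (pathThrough f).Adj (f 0) (f 1) :=
      ⟨⟨0, rfl⟩, hf.ne zero_ne_one⟩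
    refine ⟨.cons hadj ((q.mapLe hle).copy (congrArg f Fin.succ_zero_eq_one)
      (congrArg f (Fin.succ_last n))), ?_, ?_⟩
    · rw [Walk.support_cons, Walk.support_copy, Walk.support_mapLe_eq_support, hsupp,
        List.ofFn_succ (f := f)]
      rfl
    · rw [Walk.edges_cons, Walk.edges_copy, Walk.edges_mapLe_eq_edges, hedges,
        List.ofFn_succ (f := fun i : Fin (n + 1) => s(f i.castSucc, f i.succ))]
      rfl

lemma isHamPathGraph_pathThrough {n : ℕ} (f : Fin (n + 1) → Fin (n + 1)) (hf : f.Injective) :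
    IsHamPathGraph (pathThrough f) := by
  obtain ⟨p, hsupp, hedges⟩ := exists_walk_pathThrough f hf
  refine ⟨_, _, p, fun v => ?_, ?_⟩
  · rw [hsupp]
    exact List.count_eq_one_of_mem (List.nodup_ofFn.2 hf)
      (List.mem_ofFn.2 (Finite.surjective_of_injective hf v))
  · rw [hedges]
    unfold pathThrough
    rw [edgeSet_fromEdgeSet]
    ext e
    simp only [Set.mem_sdiff, Set.mem_range, Sym2.mem_diagSet, Set.mem_ofPred_eq, List.mem_ofFn]
    refine and_iff_left_of_imp ?_
    rintro ⟨i, rfl⟩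
    simpa using hf.ne Fin.castSucc_lt_succ.ne

def tenPathOrders : Fin 10 → Fin 5 → Fin 5 :=
  ![![0, 1, 2, 3, 4], ![0, 1, 2, 4, 3], ![0, 1, 3, 2, 4], ![0, 2, 1, 3, 4], ![0, 2, 1, 4, 3],
    ![0, 3, 1, 4, 2], ![1, 0, 2, 3, 4], ![1, 0, 2, 4, 3], ![1, 0, 3, 2, 4], ![2, 0, 4, 1, 3]]

lemma tenPathOrders_injective : ∀ i, (tenPathOrders i).Injective := by decide

abbrev tenPaths (i : Fin 10) : SimpleGraph (Fin 5) := pathThrough (tenPathOrders i)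

lemma isHamPathGraph_tenPaths (i : Fin 10) : IsHamPathGraph (tenPaths i) :=
  isHamPathGraph_pathThrough _ (tenPathOrders_injective i)

lemma hasCycleLen_three_tenPaths {i j : Fin 10} (hij : i ≠ j) :
    HasCycleLen (tenPaths i ⊔ tenPaths j) (· = 3) := by
  have : ∀ i j : Fin 10, i ≠ j →
      ∃ a b c : Fin 5, (tenPaths i ⊔ tenPaths j).IsNClique 3 {a, b, c} := by
    simp only [is3Clique_triple_iff]
    decide
  obtain ⟨a, b, c, habc⟩ := this i j hij
  exact hasCycleLen_three_iff.2 fun h => h _ habc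

lemma tenPaths_injective : tenPaths.Injective := by
  intro i j hij
  by_contra hne
  obtain ⟨A, -, hA⟩ := (isHamPathGraph_tenPaths j).exists_le_biparGraph
  have := hasCycleLen_three_tenPaths hne
  rw [hij, sup_idem] at this
  exact not_hasCycleLen_three_of_le_biparGraph hA this

theorem stmt6 :
    IsGreatest {m : ℕ | ∃ F : Set (SimpleGraph (Fin 5)),
      (∀ G ∈ F, IsHamPathGraph G) ∧
      (∀ G ∈ F, ∀ H ∈ F, G ≠ H → HasCycleLen (G ⊔ H) (fun l => l = 3)) ∧
      F.ncard = m} 10 := by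
  refine ⟨⟨Set.range tenPaths, ?_, ?_, ?_⟩, ?_⟩
  · rintro _ ⟨i, rfl⟩
    exact isHamPathGraph_tenPaths i
  · rintro _ ⟨i, rfl⟩ _ ⟨j, rfl⟩ hne
    exact hasCycleLen_three_tenPaths (ne_of_apply_ne tenPaths hne)
  · rw [Set.ncard_range_of_injective tenPaths_injective, Nat.card_eq_fintype_card,
      Fintype.card_fin]
  · rintro m ⟨F, hham, htri, rfl⟩
    exact ncard_le_choose_of_pairwise_hasCycleLen_three hham htri
end

section
/- For n divisible by 4, there exists a family of at least 2^(n/4) Hamiltonian paths in K_n such that the union of any two distinct members contains a copy of K_4 (four mutually adjacent vertices). -/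
open SimpleGraph

/-!
The paths 0-1-2-3 and 2-0-3-1 are complementary Hamiltonian paths of `K₄`. Cut `Fin n` into
`n / 4` consecutive blocks of four vertices; for every `ε : Fin (n / 4) → Bool`, run through the
blocks in order and traverse block `k` along the first or the second of these paths according to
`ε k`. Two different choices `ε ≠ ε'` differ at some block, and there the union of the two
Hamiltonian paths contains both paths of that block, hence a `K₄`. The edge between the first two
vertices of block `k` recovers `ε k`, so these are `2 ^ (n / 4)` distinct paths.
-/

theorem isChain_pathGraph_adj_finRange (n : ℕ) :
    (List.finRange n).IsChain (pathGraph n).Adj := by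
  rw [List.isChain_iff_getElem]
  intro i hi
  simp [pathGraph_adj]

theorem isHamPathGraph_pathGraph {n : ℕ} (hn : 0 < n) : IsHamPathGraph (pathGraph n) := by
  have hne : List.finRange n ≠ [] := by
    simp only [ne_eq, List.finRange_eq_nil_iff]; omega
  set p := Walk.ofSupport _ hne (isChain_pathGraph_adj_finRange n)
  have hlen : p.length = n - 1 := by simp only [Walk.length_ofSupport, List.length_finRange, p]
  refine ⟨_, _, p, fun v => by simp [p, List.count_finRange], ?_⟩
  ext e
  refine ⟨fun he => ?_, fun he => p.edges_subset_edgeSet he⟩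
  induction e using Sym2.ind with | _ u v => ?_
  have hvert : ∀ i (hi : i < n), p.getVert i = ⟨i, hi⟩ := fun i hi => by
    rw [Walk.getVert_eq_support_getElem _ (by omega)]
    simp [p]
  wlog huv : u.val + 1 = v.val generalizing u v
  · rw [Sym2.eq_swap]
    exact this v u (Sym2.eq_swap ▸ he) ((pathGraph_adj.1 he).resolve_left huv)
  rw [Set.mem_ofPred_eq, Walk.mk_mem_edges_iff_exists]
  refine ⟨u, by omega, ?_⟩
  rw [hvert u u.isLt, hvert (u + 1) (by omega)]
  simp [huv]

theorem IsHamPathGraph.map {n : ℕ} {G : SimpleGraph (Fin n)} (hG : IsHamPathGraph G)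
    (σ : Fin n ≃ Fin n) : IsHamPathGraph (G.map σ) := by
  obtain ⟨u, v, p, hp, hedges⟩ := hG
  let f := Iso.map σ G
  refine ⟨_, _, p.map f.toHom, hp.map _ f.bijective, ?_⟩
  have hmap : (G.map σ).edgeSet = Sym2.map σ '' G.edgeSet := edgeSet_map σ.toEmbedding G
  have hf : ⇑f = σ := funext (Iso.map_apply σ G)
  rw [hmap, hedges, Walk.edges_map]
  ext e
  simp [hf]

/-- `blockPerm b` sends a position on the path to the vertex visited there. -/
def blockPerm : Bool → Equiv.Perm (Fin 4)
  | false => 1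
  | true => ⟨![2, 0, 3, 1], ![1, 3, 0, 2], by decide, by decide⟩

theorem pathGraph_adj_blockPerm_symm_or {b b' : Bool} (hb : b ≠ b') {i j : Fin 4} (hij : i ≠ j) :
    (pathGraph 4).Adj ((blockPerm b).symm i) ((blockPerm b).symm j) ∨
      (pathGraph 4).Adj ((blockPerm b').symm i) ((blockPerm b').symm j) := by
  simp only [pathGraph_adj]
  revert b b' i j
  decide

theorem pathGraph_adj_blockPerm_symm_zero_one_iff (b : Bool) :
    (pathGraph 4).Adj ((blockPerm b).symm 0) ((blockPerm b).symm 1) ↔ b = false := by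
  simp only [pathGraph_adj]
  revert b
  decide

/-- Block `k` of `Fin n` is `{4k, 4k+1, 4k+2, 4k+3}`: `(k, i)` is sent to `4k + i`. -/
def blockEquiv {n : ℕ} (hn : 4 ∣ n) : Fin (n / 4) × Fin 4 ≃ Fin n :=
  finProdFinEquiv.trans (finCongr (Nat.div_mul_cancel hn))

theorem pathGraph_adj_blockEquiv_iff {n : ℕ} (hn : 4 ∣ n) (k : Fin (n / 4)) (i j : Fin 4) :
    (pathGraph n).Adj (blockEquiv hn (k, i)) (blockEquiv hn (k, j)) ↔ (pathGraph 4).Adj i j := by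
  simp only [pathGraph_adj, blockEquiv, Equiv.trans_apply, finCongr_apply, Fin.val_cast,
    finProdFinEquiv_apply_val]
  omega

def blockHamPath {n : ℕ} (hn : 4 ∣ n) (ε : Fin (n / 4) → Bool) : SimpleGraph (Fin n) :=
  (pathGraph n).map ((blockEquiv hn).permCongr (Equiv.prodCongrRight fun k => blockPerm (ε k)))

theorem blockHamPath_adj_iff {n : ℕ} (hn : 4 ∣ n) (ε : Fin (n / 4) → Bool) (k : Fin (n / 4))
    (i j : Fin 4) :
    (blockHamPath hn ε).Adj (blockEquiv hn (k, i)) (blockEquiv hn (k, j)) ↔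
      (pathGraph 4).Adj ((blockPerm (ε k)).symm i) ((blockPerm (ε k)).symm j) := by
  set σ := (blockEquiv hn).permCongr (Equiv.prodCongrRight fun k => blockPerm (ε k))
  have hσ : ∀ i, σ (blockEquiv hn (k, (blockPerm (ε k)).symm i)) = blockEquiv hn (k, i) := by
    intro i
    simp [σ, Equiv.permCongr_apply]
  rw [← hσ i, ← hσ j]
  exact (Iso.map σ _).map_adj_iff.trans (pathGraph_adj_blockEquiv_iff hn k _ _)

theorem blockHamPath_injective {n : ℕ} (hn : 4 ∣ n) : Function.Injective (blockHamPath hn) := by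
  intro ε ε' h
  funext k
  have hadj := congrArg (fun G => G.Adj (blockEquiv hn (k, 0)) (blockEquiv hn (k, 1))) h
  simp only [blockHamPath_adj_iff, pathGraph_adj_blockPerm_symm_zero_one_iff, eq_iff_iff] at hadj
  simpa using hadj

theorem containsK4_blockHamPath_sup {n : ℕ} (hn : 4 ∣ n) {ε ε' : Fin (n / 4) → Bool}
    (hne : ε ≠ ε') : ContainsK4 (blockHamPath hn ε ⊔ blockHamPath hn ε') := by
  obtain ⟨k, hk⟩ := Function.ne_iff.1 hne
  refine ⟨fun i => blockEquiv hn (k, i),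
    (blockEquiv hn).injective.comp (Prod.mk_right_injective k), fun i j hij => ?_⟩
  simpa only [sup_adj, blockHamPath_adj_iff] using pathGraph_adj_blockPerm_symm_or hk hij

theorem stmt18 {n : ℕ} (hn : 4 ∣ n) (hpos : 0 < n) :
    ∃ F : Set (SimpleGraph (Fin n)),
      (∀ G ∈ F, IsHamPathGraph G) ∧
      (∀ G ∈ F, ∀ H ∈ F, G ≠ H → ContainsK4 (G ⊔ H)) ∧
      2 ^ (n / 4) ≤ F.ncard := by
  refine ⟨Set.range (blockHamPath hn), ?_, ?_, ?_⟩
  · rintro _ ⟨ε, rfl⟩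
    exact (isHamPathGraph_pathGraph hpos).map _
  · rintro _ ⟨ε, rfl⟩ _ ⟨ε', rfl⟩ hne
    exact containsK4_blockHamPath_sup hn (ne_of_apply_ne _ hne)
  · simp [Set.ncard_range_of_injective (blockHamPath_injective hn)]
end
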